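/- In any run of the online algorithm ALG of Figure 3 on a complaint sequence of length T, the total loss of ALG satisfies Loss(ALG) ≤ Σ_{i=1}^k 2 f_i c_i + Σ_{i=1}^k Σ_{t=1}^T δ^t_{i→i}. -/

import Mathlib

open scoped BigOperators Classical

/-- The result of fixing vertex `i` in configuration `s`: vertex `i` becomes fixed and all
its neighbors in `G` become unfixed. -/
noncomputable def fixStep {k : ℕ} (G : SimpleGraph (Fin k)) (s : Fin k → Bool) (i : Fin k) :
    Fin k → Bool :=
  fun l => if l = i then true else if G.Adj i l then false else s l

/-- A run of the online algorithm ALG of Figure 3 on the complaint sequence `seq`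
(`seq t = (i_t, ℓ_t)`), with fixing costs `c`.  `s t` is the configuration before
processing complaint `t`, `tau` and `kap` the counters `τ` and `κ` before processing
complaint `t`, `δ t i j` the amount by which step (b), while processing the complaint at
vertex `i` at time `t`, reduced `κ_j`, and `doesFix t` records whether the complained
vertex is fixed at step (c) of time `t`. -/
structure AlgRun {k : ℕ} (G : SimpleGraph (Fin k)) (c : Fin k → ℝ)
    (seq : ℕ → Fin k × ℝ) where
  s : ℕ → Fin k → Bool
  tau : ℕ → Fin k → ℝ
  kap : ℕ → Fin k → ℝ
  δ : ℕ → Fin k → Fin k → ℝ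
  doesFix : ℕ → Bool
  h_s0 : ∀ i, s 0 i = false
  h_tau0 : ∀ i, tau 0 i = 0
  h_kap0 : ∀ i, kap 0 i = 0
  /-- barrier reductions are nonnegative -/
  h_δ_nonneg : ∀ t i j, 0 ≤ δ t i j
  /-- only the complaint at the current unfixed vertex reduces barriers, and only those of
  its neighbors -/
  h_δ_supp : ∀ t i j, δ t i j ≠ 0 →
    i = (seq t).1 ∧ G.Adj i j ∧ s t i = false
  /-- a barrier is reduced by at most its current value -/
  h_δ_le : ∀ t j, G.Adj (seq t).1 j → δ t (seq t).1 j ≤ kap t j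
  /-- the total reduction is at most the complaint loss -/
  h_δ_sum : ∀ t, s t (seq t).1 = false → (∑ j, δ t (seq t).1 j) ≤ (seq t).2
  /-- exit condition of the while loop of step (b): the loss is exhausted or all
  neighboring barriers are zero -/
  h_exit : ∀ t, s t (seq t).1 = false →
    ((∑ j, δ t (seq t).1 j) = (seq t).2 ∨
      ∀ j, G.Adj (seq t).1 j → kap t j - δ t (seq t).1 j = 0)
  /-- step (c): the complained vertex is fixed iff `τ_i ≥ max(c_i, ∑_{j∈N(i)} κ_j)` -/
  h_fix_iff : ∀ t, s t (seq t).1 = false →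
    (doesFix t = true ↔
      max (c (seq t).1)
        (∑ j, if G.Adj (seq t).1 j then kap t j - δ t (seq t).1 j else 0) ≤
        tau t (seq t).1 + (seq t).2)
  /-- a complaint at a fixed vertex changes nothing -/
  h_fixed_step : ∀ t, s t (seq t).1 = true →
    doesFix t = false ∧ (∀ i, s (t + 1) i = s t i) ∧
      (∀ i, tau (t + 1) i = tau t i) ∧ (∀ i, kap (t + 1) i = kap t i)
  /-- state and counter updates when the complained vertex gets fixed -/
  h_step_fix : ∀ t, s t (seq t).1 = false → doesFix t = true →
    (∀ i, s (t + 1) i = fixStep G (s t) (seq t).1 i) ∧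
      tau (t + 1) (seq t).1 = 0 ∧
      (∀ j, G.Adj (seq t).1 j → tau (t + 1) j = 0) ∧
      (∀ j, j ≠ (seq t).1 → ¬ G.Adj (seq t).1 j → tau (t + 1) j = tau t j) ∧
      kap (t + 1) (seq t).1 = c (seq t).1 ∧
      (∀ j, j ≠ (seq t).1 → kap (t + 1) j = kap t j - δ t (seq t).1 j)
  /-- state and counter updates when the complained vertex is not fixed -/
  h_step_nofix : ∀ t, s t (seq t).1 = false → doesFix t = false →
    (∀ i, s (t + 1) i = s t i) ∧
      tau (t + 1) (seq t).1 = tau t (seq t).1 + (seq t).2 ∧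
      (∀ j, j ≠ (seq t).1 → tau (t + 1) j = tau t j) ∧
      (∀ j, kap (t + 1) j = kap t j - δ t (seq t).1 j)

namespace AlgRun

variable {k : ℕ} {G : SimpleGraph (Fin k)} {c : Fin k → ℝ} {seq : ℕ → Fin k × ℝ}

/-- Total loss of the online algorithm over the first `T` complaints: losses of complaints
arriving at unfixed vertices plus all fixing costs incurred. -/
noncomputable def loss (R : AlgRun G c seq) (T : ℕ) : ℝ :=
  ∑ t ∈ Finset.range T,
    ((if R.s t (seq t).1 = false then (seq t).2 else 0) +
      (if R.doesFix t then c (seq t).1 else 0))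

/-- `f_i`: the number of times the run fixes vertex `i` during the first `T` steps. -/
noncomputable def fixCount (R : AlgRun G c seq) (T : ℕ) (i : Fin k) : ℕ :=
  ((Finset.range T).filter (fun t => R.doesFix t = true ∧ (seq t).1 = i)).card

/-- `δ^t_{i→i}`: the loss retained at vertex `i` at time `t`,
`ℓ_t·1(i_t = i) − ∑_{j ∈ N(i)} δ^t_{i→j}`. -/
noncomputable def deltaSelf (R : AlgRun G c seq) (t : ℕ) (i : Fin k) : ℝ :=
  (if (seq t).1 = i then (seq t).2 else 0) - ∑ j, if G.Adj i j then R.δ t i j else 0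

end AlgRun

/-- The state sequence of an offline algorithm that at each step `t`, after seeing
complaint `t`, either does nothing (`σ t = none`) or fixes the vertex `σ t`. -/
noncomputable def offStates {k : ℕ} (G : SimpleGraph (Fin k))
    (σ : ℕ → Option (Fin k)) : ℕ → Fin k → Bool
  | 0 => fun _ => false
  | t + 1 =>
    match σ t with
    | none => offStates G σ t
    | some i => fixStep G (offStates G σ t) i

/-- Total loss of the offline algorithm `σ` over the first `T` complaints. -/
noncomputable def offLoss {k : ℕ} (G : SimpleGraph (Fin k)) (c : Fin k → ℝ)
    (seq : ℕ → Fin k × ℝ) (σ : ℕ → Option (Fin k)) (T : ℕ) : ℝ :=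
  ∑ t ∈ Finset.range T,
    ((if offStates G σ t (seq t).1 = false then (seq t).2 else 0) +
      (match σ t with | none => 0 | some i => c i))

/-- The loss of the optimal offline algorithm OPT over the first `T` complaints. -/
noncomputable def optLoss {k : ℕ} (G : SimpleGraph (Fin k)) (c : Fin k → ℝ)
    (seq : ℕ → Fin k × ℝ) (T : ℕ) : ℝ :=
  ⨅ σ : ℕ → Option (Fin k), offLoss G c seq σ T

/-!
The barriers `κ` form a potential `Φ = ∑ⱼ κⱼ ≥ 0` that starts at `0`, grows by at most `cᵢ`
when `vᵢ` is fixed, and shrinks by exactly the total amount `∑ⱼ δ^t_{i→j}` that step (b)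
absorbs. Hence the absorbed complaint loss is at most the total fixing cost `∑ᵢ fᵢ cᵢ`, and
`Loss ≤ ∑ₜ ℓₜ + ∑ᵢ fᵢ cᵢ = ∑ᵢ ∑ₜ δ^t_{i→i} + (absorbed loss) + ∑ᵢ fᵢ cᵢ`.
-/

open Finset

namespace AlgRun

variable {k : ℕ} {G : SimpleGraph (Fin k)} {c : Fin k → ℝ} {seq : ℕ → Fin k × ℝ}
  (R : AlgRun G c seq)

noncomputable def fixCost (t : ℕ) : ℝ := if R.doesFix t then c (seq t).1 else 0

noncomputable def potential (t : ℕ) : ℝ := ∑ j, R.kap t j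

/-- `∑ⱼ δ^t_{i_t→j}`: the part of the complaint at time `t` absorbed by the barriers. -/
noncomputable def reduction (t : ℕ) : ℝ := ∑ j, R.δ t (seq t).1 j

lemma δ_eq_zero_of_ne {t : ℕ} {i : Fin k} (hi : i ≠ (seq t).1) (j : Fin k) : R.δ t i j = 0 :=
  by_contra fun h => hi (R.h_δ_supp t i j h).1

lemma δ_eq_zero_of_not_adj {t : ℕ} {i j : Fin k} (hij : ¬G.Adj i j) : R.δ t i j = 0 :=
  by_contra fun h => hij (R.h_δ_supp t i j h).2.1

lemma δ_eq_zero_of_fixed {t : ℕ} (hs : R.s t (seq t).1 = true) (j : Fin k) :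
    R.δ t (seq t).1 j = 0 :=
  by_contra fun h => by simpa [hs] using (R.h_δ_supp t _ j h).2.2

lemma kap_succ (t : ℕ) (j : Fin k) :
    R.kap (t + 1) j =
      if R.doesFix t = true ∧ j = (seq t).1 then c j else R.kap t j - R.δ t (seq t).1 j := by
  cases hs : R.s t (seq t).1
  · cases hf : R.doesFix t
    · simp [(R.h_step_nofix t hs hf).2.2.2 j]
    · obtain ⟨-, -, -, -, hki, hkj⟩ := R.h_step_fix t hs hf
      by_cases hj : j = (seq t).1
      · simp [hj, hki]
      · simp [hj, hkj j hj]
  · obtain ⟨hf, -, -, hk⟩ := R.h_fixed_step t hs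
    simp [hf, hk j, R.δ_eq_zero_of_fixed hs j]

lemma kap_nonneg (hc : ∀ i, 0 ≤ c i) (t : ℕ) (j : Fin k) : 0 ≤ R.kap t j := by
  induction t generalizing j with
  | zero => exact (R.h_kap0 j).ge
  | succ t ih =>
    rw [R.kap_succ]
    split_ifs
    · exact hc j
    · have hδ : R.δ t (seq t).1 j ≤ R.kap t j := by
        by_cases hadj : G.Adj (seq t).1 j
        · exact R.h_δ_le t j hadj
        · exact (R.δ_eq_zero_of_not_adj hadj).le.trans (ih j)
      linarith

lemma potential_succ_le (hc : ∀ i, 0 ≤ c i) (t : ℕ) :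
    R.potential (t + 1) ≤ R.potential t - R.reduction t + R.fixCost t := by
  have hterm : ∀ j, R.kap (t + 1) j ≤ R.kap t j - R.δ t (seq t).1 j +
      if R.doesFix t = true ∧ j = (seq t).1 then c j else 0 := by
    intro j
    rw [R.kap_succ]
    split_ifs with h
    · -- the fixed vertex is not its own neighbour, so its barrier is not reduced
      rw [h.2, R.δ_eq_zero_of_not_adj G.irrefl]
      linarith [R.kap_nonneg hc t (seq t).1]
    · simp
  calc R.potential (t + 1)
      ≤ ∑ j, (R.kap t j - R.δ t (seq t).1 j +
          if R.doesFix t = true ∧ j = (seq t).1 then c j else 0) :=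
        sum_le_sum fun j _ => hterm j
    _ = R.potential t - R.reduction t + R.fixCost t := by
      cases h : R.doesFix t <;>
        simp [h, sum_add_distrib, sum_sub_distrib, potential, reduction, fixCost]

lemma sum_reduction_le_sum_fixCost (hc : ∀ i, 0 ≤ c i) (T : ℕ) :
    ∑ t ∈ range T, R.reduction t ≤ ∑ t ∈ range T, R.fixCost t := by
  suffices R.potential T + ∑ t ∈ range T, R.reduction t ≤ ∑ t ∈ range T, R.fixCost t by
    have : 0 ≤ R.potential T := sum_nonneg fun j _ => R.kap_nonneg hc T j
    linarith
  induction T with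
  | zero => simp [potential, R.h_kap0]
  | succ T ih =>
    rw [sum_range_succ, sum_range_succ]
    linarith [R.potential_succ_le hc T]

lemma sum_fixCount_mul_eq (T : ℕ) :
    ∑ i, (R.fixCount T i : ℝ) * c i = ∑ t ∈ range T, R.fixCost t := by
  simp_rw [fixCount, card_filter, Nat.cast_sum, sum_mul, Nat.cast_ite, ite_mul,
    sum_comm (γ := Fin k)]
  refine sum_congr rfl fun t _ => ?_
  cases h : R.doesFix t <;> simp [h, fixCost]

lemma sum_deltaSelf_eq (t : ℕ) : ∑ i, R.deltaSelf t i = (seq t).2 - R.reduction t := by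
  have hadj : ∀ j, (if G.Adj (seq t).1 j then R.δ t (seq t).1 j else 0) = R.δ t (seq t).1 j :=
    fun j => by by_cases h : G.Adj (seq t).1 j <;> simp [h, R.δ_eq_zero_of_not_adj]
  have hsum : ∑ i, ∑ j, (if G.Adj i j then R.δ t i j else 0) = R.reduction t := by
    rw [sum_eq_single (seq t).1 (fun i _ hi => by simp [R.δ_eq_zero_of_ne hi]) (by simp)]
    exact sum_congr rfl fun j _ => hadj j
  simp [deltaSelf, sum_sub_distrib, hsum]

lemma loss_le (hseq : ∀ t, 0 ≤ (seq t).2) (T : ℕ) :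
    R.loss T ≤ ∑ t ∈ range T, (seq t).2 + ∑ t ∈ range T, R.fixCost t := by
  rw [loss, ← sum_add_distrib]
  refine sum_le_sum fun t _ => ?_
  split_ifs <;> simp [fixCost, *]

end AlgRun

/-- in any run of ALG on a complaint sequence of length `T`,
`Loss(ALG) ≤ ∑_i 2 f_i c_i + ∑_i ∑_t δ^t_{i→i}`. -/
theorem stmt_14 {k : ℕ} (G : SimpleGraph (Fin k)) (c : Fin k → ℝ)
    (hc : ∀ i, 1 ≤ c i) (B : ℝ)
    (seq : ℕ → Fin k × ℝ) (hseq : ∀ t, (seq t).2 ∈ Set.Icc (0 : ℝ) B)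
    (T : ℕ) (R : AlgRun G c seq) :
    R.loss T ≤ ∑ i, 2 * (R.fixCount T i : ℝ) * c i +
      ∑ i, ∑ t ∈ Finset.range T, R.deltaSelf t i := by
  have hc₀ : ∀ i, 0 ≤ c i := fun i => zero_le_one.trans (hc i)
  have hfix : ∑ i, 2 * (R.fixCount T i : ℝ) * c i = 2 * ∑ t ∈ range T, R.fixCost t := by
    simp_rw [mul_assoc, ← mul_sum, R.sum_fixCount_mul_eq]
  have hself : ∑ i, ∑ t ∈ range T, R.deltaSelf t i =
      ∑ t ∈ range T, (seq t).2 - ∑ t ∈ range T, R.reduction t := by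
    rw [sum_comm, ← sum_sub_distrib]
    exact sum_congr rfl fun t _ => R.sum_deltaSelf_eq t
  rw [hfix, hself]
  linarith [R.loss_le (fun t => (hseq t).1) T, R.sum_reduction_le_sum_fixCost hc₀ T]
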